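/- The descent set Des(P) of any partition P, regarded as a set of positive integers, is a super-distinct partition of size |P|: its elements pairwise differ by at least 2 and their sum equals |P|. -/

import Mathlib

open scoped Classical

noncomputable section

/-- `f` is a frequency sequence: `f 0 = 0` and finite support. -/
def IsFreq (f : ℕ → ℕ) : Prop := f 0 = 0 ∧ (Function.support f).Finite

/-- size `|f| = ∑ i·f i`. -/
def fsize (f : ℕ → ℕ) : ℕ := ∑ᶠ n, n * f n

/-- length `ℓ(f) = ∑ f i`. -/
def flen (f : ℕ → ℕ) : ℕ := ∑ᶠ n, f n

/-- the support `S(f)`. -/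
def suppF (f : ℕ → ℕ) : Set ℕ := {i | 1 ≤ i ∧ f i ≠ 0}

/-- `[i,j]` is a spread of `f`: a maximal interval contained in the support. -/
def IsSpread (f : ℕ → ℕ) (i j : ℕ) : Prop :=
  1 ≤ i ∧ i ≤ j ∧ (∀ k, i ≤ k → k ≤ j → f k ≠ 0) ∧ (i = 1 ∨ f (i - 1) = 0) ∧ f (j + 1) = 0

/-- `L(f)`: every other element of each spread, starting from the left end. -/
def Lset (f : ℕ → ℕ) : Set ℕ :=
  {q | ∃ i j, IsSpread f i j ∧ i ≤ q ∧ q ≤ j ∧ (q - i) % 2 = 0}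

/-- `R(f)`: every other element of each spread, starting from the right end. -/
def Rset (f : ℕ → ℕ) : Set ℕ :=
  {q | ∃ i j, IsSpread f i j ∧ i ≤ q ∧ q ≤ j ∧ (j - q) % 2 = 0}

/-- the 2-measure, as the cardinality of `R(f)`. -/
def mu2 (f : ℕ → ℕ) : ℕ := (Rset f).ncard

/-- The Burge demotion operator `∂`. -/
def dB (f : ℕ → ℕ) : ℕ → ℕ := fun n =>
  if n = 0 then 0
  else f n - (if n ∈ Rset f then 1 else 0) + (if n + 1 ∈ Rset f then 1 else 0)

/-- The promotion operator `α`. -/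
def aB (f : ℕ → ℕ) : ℕ → ℕ := fun n =>
  if n = 0 then 0
  else f n - (if n ∈ Lset f then 1 else 0) + (if n - 1 ∈ Lset f then 1 else 0)

/-- the shift `(f₂, f₃, …)`; on partitions this is `P ↦ P - 1`. -/
def tailF (f : ℕ → ℕ) : ℕ → ℕ := fun n => if n = 0 then 0 else f (n + 1)

/-- The operator `β`: `β(f) = (f₁ + 1, α(f₂, f₃, …))`. -/
def bB (f : ℕ → ℕ) : ℕ → ℕ := fun n =>
  if n = 0 then 0 else if n = 1 then f 1 + 1 else aB (tailF f) (n - 1)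

/-- the zero sequence (empty partition). -/
def zeroF : ℕ → ℕ := fun _ => 0

/-- `k` minimal with `∂^[k] f = 0`. -/
def chainK (f : ℕ → ℕ) : ℕ :=
  if h : ∃ m, dB^[m] f = zeroF then Nat.find h else 0

/-- The Burge code of `f`, as a list of letters; `false` = `a`, `true` = `b`.
The `i`-th letter (0-indexed `i`) records whether `∂^[i] f ∈ B`, i.e. `1 ∈ R(∂^[i] f)`. -/
def burgeCode (f : ℕ → ℕ) : List Bool :=
  (List.range (chainK f + 1)).map fun i => if 1 ∈ Rset (dB^[i] f) then true else false

/-- descent set of a word: 1-indexed positions `i` with `ωᵢ = b`, `ω_{i+1} = a`. -/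
def descSet (w : List Bool) : Set ℕ :=
  {i | 1 ≤ i ∧ w[i - 1]? = some true ∧ w[i]? = some false}

/-- the descent set of (the Burge code of) a partition. -/
def DesSet (f : ℕ → ℕ) : Set ℕ := descSet (burgeCode f)

/-- `Des(P)` regarded as a partition, via its frequency sequence. -/
def desFreq (f : ℕ → ℕ) : ℕ → ℕ := fun i => if i ∈ DesSet f then 1 else 0

/-- the 2-measure as the maximal size of a subset of the support without
consecutive pairs. -/
def twoMeasure (f : ℕ → ℕ) : ℕ :=
  sSup {n | ∃ T : Finset ℕ, (↑T : Set ℕ) ⊆ suppF f ∧ (∀ x ∈ T, x + 1 ∉ T) ∧ T.card = n}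

/-- evaluation at `i`: `ν_i(f) = i f_i + (i+1) f_{i+1} + 2 ∑_{j>i+1} f_j`, with `ν₀ = ν₁`. -/
def nuI (f : ℕ → ℕ) (i : ℕ) : ℕ :=
  (max i 1) * f (max i 1) + (max i 1 + 1) * f (max i 1 + 1)
    + 2 * ∑ᶠ j ∈ {j : ℕ | max i 1 + 1 < j}, f j

/-- annihilation at `i`: `ρ_i(f) = (f₁, …, f_{i-1}, f_{i+2}, f_{i+3}, …)`, with `ρ₀ = ρ₁`. -/
def rhoI (f : ℕ → ℕ) (i : ℕ) : ℕ → ℕ := fun n =>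
  if n = 0 then 0 else if n < max i 1 then f n else f (n + 2)

/-- `i ≥ 1` is right admissible in `f`. -/
def RightAdm (f : ℕ → ℕ) (i : ℕ) : Prop :=
  1 ≤ i ∧ 0 < f i ∧ (0 < f (i + 1) ∨ (f (i - 1) = 0 ∧ f (i + 1) = 0))

/-- `i ≥ 0` is left admissible in `f`. -/
def LeftAdm (f : ℕ → ℕ) (i : ℕ) : Prop :=
  0 < f (i + 1) ∧ (0 < f i ∨ (f i = 0 ∧ f (i + 2) = 0))

/-- `i` is a maximal index for `f`: `ν_i(f)` is nonzero and maximal. -/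
def MaxIdx (f : ℕ → ℕ) (i : ℕ) : Prop :=
  nuI f i ≠ 0 ∧ ∀ j, nuI f j ≤ nuI f i

end

/-!
One demotion step `f ↦ ∂f` lowers the size by `μ₂(f) = |R(f)|`, and the Burge code of `f` is
its first letter followed by the code of `∂f`. So `Des(f)` is `Des(∂f)` shifted up by one, together
with `1` exactly when `1 ∈ R(f)` but `1 ∉ R(∂f)`. The map sending `r ∈ R(∂f)` to `r + 1` when
`r + 1 ∈ R(f)`, and to `r` otherwise, is a bijection onto `R(f)` minus that same point `1`.
Induction along the chain `f, ∂f, ∂²f, …` then gives `|Des(f)| = μ₂(f)` and `∑ Des(f) = |f|`.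
Two descents are never adjacent, since the letter between them would be both `a` and `b`.
-/

open Function Set

section Spread

variable {f : ℕ → ℕ}

lemma exists_forall_ge_eq_zero (hf : (support f).Finite) : ∃ N, ∀ n, N ≤ n → f n = 0 := by
  obtain ⟨b, hb⟩ := hf.bddAbove
  exact ⟨b + 1, fun n hn => by_contra fun h => absurd (hb (mem_support.mpr h)) (by omega)⟩

lemma exists_left_end_of_ne_zero {q : ℕ} (hq : 1 ≤ q) (hfq : f q ≠ 0) :
    ∃ i, 1 ≤ i ∧ i ≤ q ∧ (∀ k, i ≤ k → k ≤ q → f k ≠ 0) ∧ (i = 1 ∨ f (i - 1) = 0) := by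
  induction q with
  | zero => omega
  | succ q ih =>
    by_cases hq0 : q = 0
    · exact ⟨1, le_rfl, by omega, fun k hk1 hk2 => by rwa [show k = q + 1 by omega], Or.inl rfl⟩
    by_cases hfq' : f q = 0
    · exact ⟨q + 1, by omega, le_rfl, fun k hk1 hk2 => by rwa [show k = q + 1 by omega],
        Or.inr hfq'⟩
    obtain ⟨i, hi1, hiq, hrun, hleft⟩ := ih (by omega) hfq'
    refine ⟨i, hi1, by omega, fun k hik hkq => ?_, hleft⟩
    rcases Nat.lt_or_ge k (q + 1) with hk | hk
    · exact hrun k hik (by omega)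
    · rwa [show k = q + 1 by omega]

lemma exists_right_end_of_ne_zero {q d : ℕ} (hfq : f q ≠ 0) (hd : f (q + d) = 0) :
    ∃ j, q ≤ j ∧ (∀ k, q ≤ k → k ≤ j → f k ≠ 0) ∧ f (j + 1) = 0 := by
  induction d generalizing q with
  | zero => exact absurd hd hfq
  | succ d ih =>
    by_cases hfq' : f (q + 1) = 0
    · exact ⟨q, le_rfl, fun k hk1 hk2 => by rwa [show k = q by omega], hfq'⟩
    obtain ⟨j, hqj, hrun, hright⟩ := ih hfq' (by rwa [Nat.add_right_comm, Nat.add_assoc])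
    refine ⟨j, by omega, fun k hqk hkj => ?_, hright⟩
    rcases Nat.eq_or_lt_of_le hqk with rfl | hk
    · exact hfq
    · exact hrun k hk hkj

lemma exists_isSpread_of_mem_suppF (hf : (support f).Finite) {q : ℕ} (hq : q ∈ suppF f) :
    ∃ i j, IsSpread f i j ∧ i ≤ q ∧ q ≤ j := by
  obtain ⟨N, hN⟩ := exists_forall_ge_eq_zero hf
  obtain ⟨i, hi1, hiq, hrunL, hleft⟩ := exists_left_end_of_ne_zero hq.1 hq.2
  obtain ⟨j, hqj, hrunR, hright⟩ := exists_right_end_of_ne_zero hq.2 (hN (q + N) (by omega))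
  refine ⟨i, j, ⟨hi1, hiq.trans hqj, fun k hik hkj => ?_, hleft, hright⟩, hiq, hqj⟩
  rcases Nat.lt_or_ge k q with hk | hk
  · exact hrunL k hik hk.le
  · exact hrunR k hk hkj

lemma IsSpread.right_eq {i j i' j' q : ℕ} (h : IsSpread f i j) (h' : IsSpread f i' j')
    (hiq : i ≤ q) (hqj : q ≤ j) (hi'q : i' ≤ q) (hqj' : q ≤ j') : j = j' := by
  by_contra hne
  rcases Nat.lt_or_gt_of_ne hne with hlt | hlt
  · exact h'.2.2.1 (j + 1) (by omega) (by omega) h.2.2.2.2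
  · exact h.2.2.1 (j' + 1) (by omega) (by omega) h'.2.2.2.2

lemma Rset_subset_suppF (f : ℕ → ℕ) : Rset f ⊆ suppF f := by
  rintro q ⟨i, j, hs, hiq, hqj, -⟩
  exact ⟨hs.1.trans hiq, hs.2.2.1 q hiq hqj⟩

lemma Rset_finite (hf : (support f).Finite) : (Rset f).Finite :=
  hf.subset fun _ hq => (Rset_subset_suppF f hq).2

lemma zero_notMem_Rset (f : ℕ → ℕ) : 0 ∉ Rset f := fun h => by
  have := (Rset_subset_suppF f h).1
  omega

lemma succ_notMem_Rset {q : ℕ} (hq : q ∈ Rset f) : q + 1 ∉ Rset f := by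
  obtain ⟨i, j, hs, hiq, hqj, hpar⟩ := hq
  rintro ⟨i', j', hs', hi'q, hqj', hpar'⟩
  have hqj : q + 1 ≤ j := by
    by_contra h
    exact hs'.2.2.1 (q + 1) hi'q hqj' (by rw [show q = j by omega]; exact hs.2.2.2.2)
  have := hs.right_eq hs' (q := q + 1) (by omega) hqj hi'q hqj'
  omega

lemma mem_Rset_iff (hf : (support f).Finite) {q : ℕ} :
    q ∈ Rset f ↔ q ∈ suppF f ∧ q + 1 ∉ Rset f := by
  refine ⟨fun h => ⟨Rset_subset_suppF f h, succ_notMem_Rset h⟩, fun ⟨hq, hq1⟩ => ?_⟩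
  obtain ⟨i, j, hs, hiq, hqj⟩ := exists_isSpread_of_mem_suppF hf hq
  rcases Nat.even_or_odd (j - q) with ⟨m, hm⟩ | ⟨m, hm⟩
  · exact ⟨i, j, hs, hiq, hqj, by omega⟩
  · exact absurd ⟨i, j, hs, by omega, by omega, by omega⟩ hq1

end Spread

section Demotion

variable {f : ℕ → ℕ}

lemma dB_add_ite {n : ℕ} (hn : n ≠ 0) :
    dB f n + (if n ∈ Rset f then 1 else 0) = f n + (if n + 1 ∈ Rset f then 1 else 0) := by
  have hpos : (if n ∈ Rset f then 1 else 0) ≤ f n := by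
    split_ifs with h
    · exact Nat.one_le_iff_ne_zero.mpr (Rset_subset_suppF f h).2
    · exact Nat.zero_le _
  simp only [dB, if_neg hn]
  split_ifs at hpos ⊢ <;> omega

lemma dB_eq_zero_of_forall_ge {N : ℕ} (hN : ∀ n, N ≤ n → f n = 0) {n : ℕ} (hn : N ≤ n) :
    dB f n = 0 := by
  rcases Nat.eq_zero_or_pos n with rfl | hn0
  · simp [dB]
  have hnR : ∀ m, N ≤ m → m ∉ Rset f := fun m hm h => (Rset_subset_suppF f h).2 (hN m hm)
  have := dB_add_ite (f := f) hn0.ne'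
  rw [if_neg (hnR n hn), if_neg (hnR (n + 1) (by omega)), hN n hn] at this
  omega

lemma support_dB_finite (hf : (support f).Finite) : (support (dB f)).Finite := by
  obtain ⟨N, hN⟩ := exists_forall_ge_eq_zero hf
  refine (finite_Iio N).subset fun n hn => ?_
  by_contra h
  exact hn (dB_eq_zero_of_forall_ge hN (not_lt.mp h))

lemma isFreq_dB (hf : IsFreq f) : IsFreq (dB f) :=
  ⟨by simp [dB], support_dB_finite hf.2⟩

lemma mem_Rset_of_ne_zero_dB (hf : (support f).Finite) {r : ℕ} (hr : 1 ≤ r) (h : dB f r ≠ 0)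
    (h' : r + 1 ∉ Rset f) : r ∈ Rset f := by
  by_contra hR
  have := dB_add_ite (f := f) (n := r) (by omega)
  rw [if_neg hR, if_neg h'] at this
  exact hR ((mem_Rset_iff hf).mpr ⟨⟨hr, by omega⟩, h'⟩)

lemma pred_mem_Rset_dB (hf : (support f).Finite) {q : ℕ} (hq : 2 ≤ q) (h : q ∈ Rset f)
    (h' : q ∉ Rset (dB f)) : q - 1 ∈ Rset (dB f) := by
  have hq1 : q - 1 + 1 = q := by omega
  have hpred : q - 1 ∉ Rset f := fun hp => succ_notMem_Rset hp (hq1 ▸ h)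
  have := dB_add_ite (f := f) (n := q - 1) (by omega)
  rw [if_neg hpred, hq1, if_pos h] at this
  exact (mem_Rset_iff (support_dB_finite hf)).mpr ⟨⟨by omega, by omega⟩, hq1 ▸ h'⟩

end Demotion

section Measure

variable {f : ℕ → ℕ}

lemma mu2_eq_mu2_dB_add (hf : (support f).Finite) :
    mu2 f = mu2 (dB f) + if 1 ∈ Rset f ∧ 1 ∉ Rset (dB f) then 1 else 0 := by
  set S := {q ∈ Rset f | q = 1 → q ∈ Rset (dB f)}
  have two_le_of_notMem : ∀ q ∈ S, q ∉ Rset (dB f) → 2 ≤ q := fun q ⟨hq, hq1⟩ h => by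
    have := (Rset_subset_suppF _ hq).1
    by_contra
    exact h (hq1 (by omega))
  have hbij : BijOn (fun r => if r + 1 ∈ Rset f then r + 1 else r) (Rset (dB f)) S := by
    refine InvOn.bijOn (f' := fun q => if q ∈ Rset (dB f) then q else q - 1) ⟨?_, ?_⟩ ?_ ?_
    · intro r hr
      by_cases h : r + 1 ∈ Rset f <;> simp [h, hr, succ_notMem_Rset hr]
    · intro q hqS
      by_cases h : q ∈ Rset (dB f)
      · simp [h, succ_notMem_Rset hqS.1]
      · have := two_le_of_notMem q hqS h
        simp [h, Nat.sub_add_cancel (by omega : 1 ≤ q), hqS.1]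
    · intro r hr
      have hr1 := (Rset_subset_suppF _ hr).1
      by_cases h : r + 1 ∈ Rset f
      · simp only [if_pos h]
        exact ⟨h, by omega⟩
      · simp only [if_neg h]
        exact ⟨mem_Rset_of_ne_zero_dB hf hr1 (Rset_subset_suppF _ hr).2 h, fun _ => hr⟩
    · intro q hqS
      by_cases h : q ∈ Rset (dB f)
      · simp [h]
      · simpa [h] using pred_mem_Rset_dB hf (two_le_of_notMem q hqS h) hqS.1 h
  have hS : mu2 f = S.ncard + if 1 ∈ Rset f ∧ 1 ∉ Rset (dB f) then 1 else 0 := by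
    rw [mu2]
    split_ifs with hc
    · have h1S : 1 ∉ S := fun h => hc.2 (h.2 rfl)
      have hR : Rset f = insert 1 S := by
        ext q; rcases eq_or_ne q 1 with rfl | hq1 <;> simp [S, hc.1, *]
      rw [hR, ncard_insert_of_notMem h1S ((Rset_finite hf).subset (sep_subset _ _))]
    · have hR : Rset f = S := by
        ext q; rcases eq_or_ne q 1 with rfl | hq1 <;> simp_all [S]
      rw [hR, add_zero]
  rw [hS, ← hbij.ncard_eq, mu2]

end Measure

section Size

variable {f : ℕ → ℕ}

lemma fsize_eq_sum_range {N : ℕ} (hN : ∀ n, N ≤ n → f n = 0) :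
    fsize f = ∑ n ∈ Finset.range N, n * f n := by
  refine finsum_eq_sum_of_support_subset _ fun n hn => ?_
  by_contra h
  exact hn (by simp [hN n (by simpa using h)])

lemma fsize_eq_fsize_dB_add (hf : (support f).Finite) : fsize f = fsize (dB f) + mu2 f := by
  obtain ⟨N, hN⟩ := exists_forall_ge_eq_zero hf
  let g : ℕ → ℕ := fun n => if n ∈ Rset f then 1 else 0
  have hgN : ∀ n, N ≤ n → g n = 0 := fun n hn =>
    if_neg fun h => (Rset_subset_suppF f h).2 (hN n hn)
  have hpoint : ∀ n, n * dB f n + n * g n = n * f n + n * g (n + 1) := fun n => by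
    rcases eq_or_ne n 0 with rfl | hn
    · simp
    · rw [← mul_add, ← mul_add, dB_add_ite hn]
  have hsum : ∑ n ∈ Finset.range N, (n * dB f n + n * g n)
      = ∑ n ∈ Finset.range N, (n * f n + n * g (n + 1)) := Finset.sum_congr rfl fun n _ => hpoint n
  rw [Finset.sum_add_distrib, Finset.sum_add_distrib] at hsum
  have hshift : ∑ n ∈ Finset.range N, n * g (n + 1) + ∑ n ∈ Finset.range N, g (n + 1)
      = ∑ n ∈ Finset.range N, n * g n := by
    rw [← Finset.sum_add_distrib]
    have := Finset.sum_range_succ' (fun n => n * g n) N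
    rw [Finset.sum_range_succ, hgN N le_rfl] at this
    simpa [add_mul] using this.symm
  have hcard : ∑ n ∈ Finset.range N, g (n + 1) = mu2 f := by
    have hR : Rset f = ↑({n ∈ Finset.range (N + 1) | n ∈ Rset f}) := by
      ext n
      simp only [Finset.coe_filter, Finset.mem_range, mem_ofPred_eq, iff_and_self]
      intro h
      by_contra
      exact (Rset_subset_suppF f h).2 (hN n (by omega))
    rw [mu2, hR, ncard_coe_finset, Finset.card_filter, Finset.sum_range_succ',
      if_neg (zero_notMem_Rset f), add_zero]
  rw [fsize_eq_sum_range hN, fsize_eq_sum_range (fun n hn => dB_eq_zero_of_forall_ge hN hn)]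
  omega

end Size

section Chain

lemma Rset_zeroF : Rset zeroF = ∅ :=
  eq_empty_of_forall_notMem fun _ h => (Rset_subset_suppF _ h).2 rfl

lemma mu2_pos {f : ℕ → ℕ} (hf : IsFreq f) (hne : f ≠ zeroF) : 0 < mu2 f := by
  obtain ⟨n, hn⟩ : ∃ n, f n ≠ 0 := by
    by_contra! h
    exact hne (funext h)
  have hn1 : 1 ≤ n := Nat.one_le_iff_ne_zero.mpr fun h => hn (h ▸ hf.1)
  obtain ⟨i, j, hs, hin, hnj⟩ := exists_isSpread_of_mem_suppF hf.2 ⟨hn1, hn⟩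
  exact (ncard_pos (Rset_finite hf.2)).mpr ⟨j, i, j, hs, hin.trans hnj, le_rfl, by simp⟩

theorem IsFreq.induction_on_dB {P : (ℕ → ℕ) → Prop} (zero : P zeroF)
    (step : ∀ f, IsFreq f → f ≠ zeroF → P (dB f) → P f) {f : ℕ → ℕ} (hf : IsFreq f) : P f := by
  induction h : fsize f using Nat.strong_induction_on generalizing f with
  | _ n ih =>
    by_cases hne : f = zeroF
    · exact hne ▸ zero
    refine step f hf hne (ih _ ?_ (isFreq_dB hf) rfl)
    have := fsize_eq_fsize_dB_add hf.2
    have := mu2_pos hf hne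
    omega

lemma exists_iterate_dB_eq_zeroF {f : ℕ → ℕ} (hf : IsFreq f) : ∃ m, dB^[m] f = zeroF :=
  hf.induction_on_dB (P := fun f => ∃ m, dB^[m] f = zeroF) ⟨0, rfl⟩ fun _ _ _ ⟨m, hm⟩ => ⟨m + 1, hm⟩

lemma chainK_zeroF : chainK zeroF = 0 := by
  rw [chainK, dif_pos ⟨0, rfl⟩, Nat.find_eq_zero]
  rfl

lemma chainK_eq_chainK_dB_add_one {f : ℕ → ℕ} (hf : IsFreq f) (hne : f ≠ zeroF) :
    chainK f = chainK (dB f) + 1 := by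
  rw [chainK, chainK, dif_pos (exists_iterate_dB_eq_zeroF hf),
    dif_pos (exists_iterate_dB_eq_zeroF (isFreq_dB hf))]
  exact Nat.find_comp_succ _ _ hne

lemma burgeCode_zeroF : burgeCode zeroF = [false] := by
  simp [burgeCode, chainK_zeroF, Rset_zeroF]

lemma burgeCode_eq_cons {f : ℕ → ℕ} (hf : IsFreq f) (hne : f ≠ zeroF) :
    burgeCode f = (if 1 ∈ Rset f then true else false) :: burgeCode (dB f) := by
  rw [burgeCode, burgeCode, chainK_eq_chainK_dB_add_one hf hne, List.range_succ_eq_map,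
    List.map_cons, List.map_map]
  rfl

lemma burgeCode_getElem?_zero (f : ℕ → ℕ) :
    (burgeCode f)[0]? = some (if 1 ∈ Rset f then true else false) := by
  simp [burgeCode]

end Chain

section Descent

lemma finsum_mem_image_add_one {T : Set ℕ} (hT : T.Finite) :
    ∑ᶠ i ∈ (· + 1) '' T, i = ∑ᶠ i ∈ T, i + T.ncard := by
  rw [finsum_mem_image (add_left_injective 1).injOn, finsum_mem_add_distrib hT, finsum_one]

lemma descSet_finite (w : List Bool) : (descSet w).Finite :=
  (finite_Iio w.length).subset fun _ hi => (List.getElem?_eq_some_iff.mp hi.2.2).1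

lemma one_notMem_image_add_one_descSet (w : List Bool) : 1 ∉ (· + 1) '' descSet w := by
  rintro ⟨i, hi, hi1⟩
  have := hi.1
  simp only at hi1
  omega

lemma descSet_cons (x : Bool) (w : List Bool) :
    descSet (x :: w) = if x = true ∧ w[0]? = some false then insert 1 ((· + 1) '' descSet w)
      else (· + 1) '' descSet w := by
  ext i
  rcases i with _ | _ | i <;> split_ifs <;> simp_all [descSet]

lemma succ_notMem_descSet {w : List Bool} {i : ℕ} (hi : i ∈ descSet w) : i + 1 ∉ descSet w :=
  fun hi1 => by simpa [hi.2.2] using hi1.2.1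

end Descent

section Main

variable {f : ℕ → ℕ}

lemma DesSet_eq (hf : IsFreq f) (hne : f ≠ zeroF) :
    DesSet f = if 1 ∈ Rset f ∧ 1 ∉ Rset (dB f) then insert 1 ((· + 1) '' DesSet (dB f))
      else (· + 1) '' DesSet (dB f) := by
  rw [DesSet, burgeCode_eq_cons hf hne, descSet_cons, burgeCode_getElem?_zero]
  simp [DesSet]

lemma DesSet_zeroF : DesSet zeroF = ∅ := by
  rw [DesSet, burgeCode_zeroF, descSet_cons]
  simp [descSet]

theorem ncard_DesSet_eq_mu2_and_finsum_DesSet_eq_fsize (hf : IsFreq f) :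
    (DesSet f).ncard = mu2 f ∧ ∑ᶠ i ∈ DesSet f, i = fsize f := by
  refine hf.induction_on_dB
    (P := fun f => (DesSet f).ncard = mu2 f ∧ ∑ᶠ i ∈ DesSet f, i = fsize f) ?_ fun g hg hne ih => ?_
  · simp [DesSet_zeroF, mu2, Rset_zeroF, fsize, zeroF]
  obtain ⟨ih_card, ih_sum⟩ := ih
  have hmu := mu2_eq_mu2_dB_add hg.2
  have hsize := fsize_eq_fsize_dB_add hg.2
  have hfin : (DesSet (dB g)).Finite := descSet_finite _
  have h1 : 1 ∉ (· + 1) '' DesSet (dB g) := one_notMem_image_add_one_descSet _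
  rw [DesSet_eq hg hne]
  split_ifs at hmu ⊢
  · rw [ncard_insert_of_notMem h1 (hfin.image _), finsum_mem_insert _ h1 (hfin.image _),
      ncard_image_of_injective _ (add_left_injective 1), finsum_mem_image_add_one hfin]
    constructor <;> omega
  · rw [ncard_image_of_injective _ (add_left_injective 1), finsum_mem_image_add_one hfin]
    constructor <;> omega

end Main

/-- `Des(P)` is a super-distinct partition of size `|P|`: its
elements are positive, pairwise differ by at least 2, and sum to `|P|`. -/
theorem stmt11 (f : ℕ → ℕ) (hf : IsFreq f) :
    (∀ x ∈ DesSet f, 1 ≤ x) ∧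
    (∀ x ∈ DesSet f, ∀ y ∈ DesSet f, x ≠ y → 2 ≤ max x y - min x y) ∧
    ∑ᶠ i ∈ DesSet f, i = fsize f := by
  refine ⟨fun x hx => hx.1, fun x hx y hy hxy => ?_,
    (ncard_DesSet_eq_mu2_and_finsum_DesSet_eq_fsize hf).2⟩
  rcases Nat.lt_or_gt_of_ne hxy with h | h
  · have : y ≠ x + 1 := fun h => succ_notMem_descSet hx (h ▸ hy)
    omega
  · have : x ≠ y + 1 := fun h => succ_notMem_descSet hy (h ▸ hx)
    omega
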